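/- In the graph G'' of the dominating-set TJ-to-TS construction, for every function σ : {1,…,k} → V, the set {σ(i)^i : 1 ≤ i ≤ k} ∪ {z_init} is a dominating set of G'' if and only if σ is injective and {σ(1),…,σ(k)} is a dominating set of G. -/
import Mathlib


/-- `I` is an independent set of the graph `G`. -/
def IsIndepFinset {α : Type*} (G : SimpleGraph α) (I : Finset α) : Prop :=
  ∀ u ∈ I, ∀ v ∈ I, ¬ G.Adj u v

/-- `D` is a dominating set of the graph `G`. -/
def IsDomFinset {α : Type*} (G : SimpleGraph α) (D : Finset α) : Prop :=
  ∀ x : α, x ∈ D ∨ ∃ y ∈ D, G.Adj x y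

/-- A token-jumping step: some token jumps from `u ∈ I` to `w ∉ I`. -/
def TJStep {α : Type*} [DecidableEq α] (I J : Finset α) : Prop :=
  ∃ u ∈ I, ∃ w, w ∉ I ∧ J = insert w (I.erase u)

/-- A token-sliding step: some token slides from `u ∈ I` along an edge to `w ∉ I`. -/
def TSStep {α : Type*} [DecidableEq α] (G : SimpleGraph α) (I J : Finset α) : Prop :=
  ∃ u ∈ I, ∃ w, w ∉ I ∧ G.Adj u w ∧ J = insert w (I.erase u)

/-- A partitioned token-jumping step with respect to token sets `Q`. -/
def PTJStep {α : Type*} {ι : Type*} [DecidableEq α] (Q : ι → Set α) (I J : Finset α) : Prop :=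
  ∃ u ∈ I, ∃ w, w ∉ I ∧ (∃ i, u ∈ Q i ∧ w ∈ Q i) ∧ J = insert w (I.erase u)

/-- A partitioned token-sliding step with respect to token sets `Q`. -/
def PTSStep {α : Type*} {ι : Type*} [DecidableEq α] (G : SimpleGraph α) (Q : ι → Set α)
    (I J : Finset α) : Prop :=
  ∃ u ∈ I, ∃ w, w ∉ I ∧ G.Adj u w ∧ (∃ i, u ∈ Q i ∧ w ∈ Q i) ∧ J = insert w (I.erase u)

/-- There is a reconfiguration sequence `A = f 0, f 1, …, f ℓ = B` of length `ℓ`, all of whose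
members satisfy `Valid`, with consecutive members related by `Step`. -/
def AdmitsSeq {α : Type*} (Valid : Finset α → Prop) (Step : Finset α → Finset α → Prop)
    (A B : Finset α) (ℓ : ℕ) : Prop :=
  ∃ f : ℕ → Finset α, f 0 = A ∧ f ℓ = B ∧ (∀ i, i ≤ ℓ → Valid (f i)) ∧
    ∀ i, i < ℓ → Step (f i) (f (i + 1))

/-- Ordered pairs of distinct indices `i ≠ j` in `{1,…,k}`, indexing the vertices `x_v^{i,j}`. -/
abbrev DistinctPair (k : ℕ) : Type := {p : Fin k × Fin k // p.1 ≠ p.2}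

/-- Vertices of the graph `G''` of the dominating-set TJ-to-TS construction. -/
inductive GVfour (V : Type*) (k : ℕ) : Type _ where
  | copy : V → Fin k → GVfour V k      -- the copies v^i
  | gar : Fin k → GVfour V k           -- gar^i
  | gar' : Fin k → GVfour V k          -- gar'^i
  | x : V → DistinctPair k → GVfour V k -- x_v^{i,j} for i ≠ j
  | orig : V → GVfour V k              -- v'
  | fv : Fin k → GVfour V k            -- f^i
  | zinit : GVfour V k
  | zfin : GVfour V k
  | zgar : GVfour V k
  | zgar' : GVfour V k
deriving DecidableEq

/-- The edges of `G''`. -/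
def relFour {V : Type*} {k : ℕ} (G : SimpleGraph V) (Dfin : Finset V) :
    GVfour V k → GVfour V k → Prop
  | .copy _ i, .copy _ j => i = j
  | .gar i, .copy _ j => i = j
  | .gar' i, .copy _ j => i = j
  | .x v p, .copy w j => (j = p.val.1 ∨ j = p.val.2) ∧ w ≠ v
  | .orig v, .copy w _ => G.Adj v w ∨ v = w
  | .fv i, .gar j => i = j
  | .fv i, .gar' j => i = j
  | .fv i, .copy v j => i = j ∧ v ∈ Dfin
  | .fv _, .zinit => True
  | .zgar, .zinit => True
  | .zgar, .zfin => True
  | .zgar', .zinit => True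
  | .zgar', .zfin => True
  | .zinit, .zfin => True
  | .zfin, .orig _ => True
  | .zfin, .copy _ _ => True
  | _, _ => False

/-- The graph `G''` of the dominating-set TJ-to-TS construction. -/
def GppFour {V : Type*} (k : ℕ) (G : SimpleGraph V) (Dfin : Finset V) :
    SimpleGraph (GVfour V k) :=
  SimpleGraph.fromRel (relFour G Dfin)

/-- for every `σ : {1,…,k} → V`, the set `{σ(i)^i : 1 ≤ i ≤ k} ∪ {z_init}` is a
dominating set of `G''` iff `σ` is injective and `{σ(1),…,σ(k)}` is a dominating set of `G`. -/
theorem stmt14 {V : Type*} [Fintype V] [DecidableEq V] (G : SimpleGraph V) (k : ℕ)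
    (Dfin : Finset V) (hDfin : IsDomFinset G Dfin) (hcf : Dfin.card = k)
    (σ : Fin k → V) :
    IsDomFinset (GppFour k G Dfin)
      (insert GVfour.zinit (Finset.univ.image fun i => GVfour.copy (σ i) i)) ↔
    Function.Injective σ ∧ IsDomFinset G (Finset.univ.image σ) := by
  classical
  constructor
  · intro hdom
    constructor
    · intro i j hij
      by_contra hne
      rcases hdom (GVfour.x (σ i) ⟨(i, j), hne⟩) with h | ⟨y, hy, hadj⟩
      · simp [Finset.mem_insert, Finset.mem_image] at h
      · simp only [Finset.mem_insert, Finset.mem_image, Finset.mem_univ, true_and] at hy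
        rcases hy with rfl | ⟨l, rfl⟩
        · simp [GppFour, SimpleGraph.fromRel_adj, relFour] at hadj
        · simp only [GppFour, SimpleGraph.fromRel_adj, relFour] at hadj
          obtain ⟨-, h⟩ := hadj
          rcases h with ⟨h1 | h1, h2⟩ | h
          · subst h1; exact h2 rfl
          · subst h1; exact h2 hij.symm
          · exact h
    · intro v
      rcases hdom (GVfour.orig v) with h | ⟨y, hy, hadj⟩
      · simp [Finset.mem_insert, Finset.mem_image] at h
      · simp only [Finset.mem_insert, Finset.mem_image, Finset.mem_univ, true_and] at hy
        rcases hy with rfl | ⟨l, rfl⟩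
        · simp [GppFour, SimpleGraph.fromRel_adj, relFour] at hadj
        · simp only [GppFour, SimpleGraph.fromRel_adj, relFour] at hadj
          obtain ⟨-, h⟩ := hadj
          rcases h with (h | h) | h
          · exact Or.inr ⟨σ l, Finset.mem_image_of_mem σ (Finset.mem_univ l), h⟩
          · exact Or.inl (by rw [h]; exact Finset.mem_image_of_mem σ (Finset.mem_univ l))
          · exact h.elim
  · rintro ⟨hinj, hdomG⟩ a
    have hmem : ∀ l : Fin k, GVfour.copy (σ l) l ∈
        insert GVfour.zinit (Finset.univ.image fun i => GVfour.copy (σ i) i) := by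
      intro l
      exact Finset.mem_insert_of_mem (Finset.mem_image_of_mem _ (Finset.mem_univ l))
    cases a with
    | copy v i =>
      by_cases hv : v = σ i
      · exact Or.inl (hv ▸ hmem i)
      · refine Or.inr ⟨GVfour.copy (σ i) i, hmem i, ?_⟩
        simp [GppFour, SimpleGraph.fromRel_adj, relFour, hv]
    | gar i =>
      exact Or.inr ⟨GVfour.copy (σ i) i, hmem i, by
        simp [GppFour, SimpleGraph.fromRel_adj, relFour]⟩
    | gar' i =>
      exact Or.inr ⟨GVfour.copy (σ i) i, hmem i, by
        simp [GppFour, SimpleGraph.fromRel_adj, relFour]⟩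
    | x v p =>
      obtain ⟨⟨i, j⟩, hne⟩ := p
      have : σ i ≠ v ∨ σ j ≠ v := by
        by_contra h
        push_neg at h
        exact hne (hinj (h.1.trans h.2.symm))
      rcases this with h | h
      · refine Or.inr ⟨GVfour.copy (σ i) i, hmem i, ?_⟩
        simp [GppFour, SimpleGraph.fromRel_adj, relFour, h]
      · refine Or.inr ⟨GVfour.copy (σ j) j, hmem j, ?_⟩
        simp [GppFour, SimpleGraph.fromRel_adj, relFour, h]
    | orig v =>
      rcases hdomG v with h | ⟨y, hy, hadj⟩
      · simp only [Finset.mem_image, Finset.mem_univ, true_and] at h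
        obtain ⟨i, rfl⟩ := h
        exact Or.inr ⟨GVfour.copy (σ i) i, hmem i, by
          simp [GppFour, SimpleGraph.fromRel_adj, relFour]⟩
      · simp only [Finset.mem_image, Finset.mem_univ, true_and] at hy
        obtain ⟨i, rfl⟩ := hy
        exact Or.inr ⟨GVfour.copy (σ i) i, hmem i, by
          simp [GppFour, SimpleGraph.fromRel_adj, relFour, hadj]⟩
    | fv i =>
      exact Or.inr ⟨GVfour.zinit, Finset.mem_insert_self _ _, by
        simp [GppFour, SimpleGraph.fromRel_adj, relFour]⟩
    | zinit => exact Or.inl (Finset.mem_insert_self _ _)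
    | zfin =>
      exact Or.inr ⟨GVfour.zinit, Finset.mem_insert_self _ _, by
        simp [GppFour, SimpleGraph.fromRel_adj, relFour]⟩
    | zgar =>
      exact Or.inr ⟨GVfour.zinit, Finset.mem_insert_self _ _, by
        simp [GppFour, SimpleGraph.fromRel_adj, relFour]⟩
    | zgar' =>
      exact Or.inr ⟨GVfour.zinit, Finset.mem_insert_self _ _, by
        simp [GppFour, SimpleGraph.fromRel_adj, relFour]⟩
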